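/- Let A be a real n×n matrix, B a real n×m matrix, K a real m×n matrix, P a symmetric real n×n matrix, and define M = (A−BK)ᵀP + P(A−BK), L = PBK, Λ = (A−BK)ᵀM + M(A−BK) + (A−BK)ᵀLᵀ + L(A−BK), Γ = (A−BK)ᵀL + MBK + LBK, and γ = LᵀBK + KᵀBᵀL. Let Ψ = [[A−BK, BK],[A−BK, BK]] and 𝒫 = [[P, 0],[0, 0]]. Then for any ξ_k ∈ ℝ^{2n} and t_k ∈ ℝ, the function V(t) = ξ(t)ᵀ 𝒫 ξ(t) with ξ(t) = exp(Ψ(t − t_k)) ξ_k is twice differentiable and its second derivative satisfies V''(t) = ξ(t)ᵀ [[Λ, Γ],[Γᵀ, γ]] ξ(t) for all t. -/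

import Mathlib

open Matrix NormedSpace

/-!
The augmented state solves the linear ODE `ξ' = Ψ ξ`, so any quadratic form `ξᵀ C ξ` along it
has derivative `ξᵀ (Ψᵀ C + C Ψ) ξ`. Applying this twice, first with `C = 𝒫` and then with
`C = Ψᵀ 𝒫 + 𝒫 Ψ = [[M, L], [Lᵀ, 0]]`, gives `V''`; the block formulas for `Λ, Γ, γ` are just the
block products, with the symmetry of `P` (hence of `M`) making the lower-left block `Γᵀ`.
-/

section QuadraticForm

variable {𝕜 ι : Type*} [NontriviallyNormedField 𝕜] [Fintype ι]

theorem HasDerivAt.dotProduct {u v : 𝕜 → ι → 𝕜} {u' v' : ι → 𝕜} {t : 𝕜}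
    (hu : HasDerivAt u u' t) (hv : HasDerivAt v v' t) :
    HasDerivAt (fun s => u s ⬝ᵥ v s) (u' ⬝ᵥ v t + u t ⬝ᵥ v') t := by
  have h := HasDerivAt.fun_sum (u := Finset.univ) fun i _ =>
    (hasDerivAt_pi.mp hu i).fun_mul (hasDerivAt_pi.mp hv i)
  rw [Finset.sum_add_distrib] at h
  exact h

theorem HasDerivAt.const_mulVec {κ : Type*} (C : Matrix κ ι 𝕜) {v : 𝕜 → ι → 𝕜} {v' : ι → 𝕜}
    {t : 𝕜} (hv : HasDerivAt v v' t) : HasDerivAt (fun s => C *ᵥ v s) (C *ᵥ v') t :=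
  hasDerivAt_pi.mpr fun i => HasDerivAt.fun_sum fun j _ => (hasDerivAt_pi.mp hv j).const_mul (C i j)

theorem HasDerivAt.dotProduct_mulVec_of_eq_mulVec {x : 𝕜 → ι → 𝕜} {Ψ : Matrix ι ι 𝕜} {t : 𝕜}
    (hx : HasDerivAt x (Ψ *ᵥ x t) t) (C : Matrix ι ι 𝕜) :
    HasDerivAt (fun s => x s ⬝ᵥ (C *ᵥ x s)) (x t ⬝ᵥ ((Ψᵀ * C + C * Ψ) *ᵥ x t)) t := by
  convert hx.dotProduct (hx.const_mulVec C) using 1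
  rw [add_mulVec, dotProduct_add, ← mulVec_mulVec, ← mulVec_mulVec, dotProduct_mulVec,
    vecMul_transpose]

end QuadraticForm

section MatrixExp

-- Any submultiplicative norm will do: `exp` only depends on the topology of the matrices.
attribute [local instance] Matrix.linftyOpNormedRing Matrix.linftyOpNormedAlgebra

theorem hasDerivAt_exp_sub_smul_mulVec {𝕂 ι : Type*} [RCLike 𝕂] [Fintype ι] [DecidableEq ι]
    (Ψ : Matrix ι ι 𝕂) (s : 𝕂) (v : ι → 𝕂) (t : 𝕂) :
    HasDerivAt (fun u => exp ((u - s) • Ψ) *ᵥ v) (Ψ *ᵥ (exp ((t - s) • Ψ) *ᵥ v)) t := by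
  have : CompleteSpace (Matrix ι ι 𝕂) := FiniteDimensional.complete 𝕂 _
  have hexp : HasDerivAt (fun u => exp ((u - s) • Ψ)) (Ψ * exp ((t - s) • Ψ)) t := by
    have h := (hasDerivAt_exp_smul_const' Ψ (t - s)).scomp t ((hasDerivAt_id t).sub_const s)
    rw [one_smul] at h
    exact h
  let applyTo : Matrix ι ι 𝕂 →ₗ[𝕂] ι → 𝕂 :=
    { toFun := fun N => N *ᵥ v
      map_add' := fun N N' => add_mulVec N N' v
      map_smul' := fun c N => smul_mulVec c N v }
  rw [mulVec_mulVec]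
  exact applyTo.toContinuousLinearMap.hasFDerivAt.comp_hasDerivAt t hexp

end MatrixExp

theorem fromBlocks_transpose_mul_add_mul_fromBlocks {n R : Type*} [Fintype n] [CommRing R]
    (X Y M L : Matrix n n R) (hM : Mᵀ = M) :
    (fromBlocks X Y X Y)ᵀ * fromBlocks M L Lᵀ 0 + fromBlocks M L Lᵀ 0 * fromBlocks X Y X Y =
      fromBlocks (Xᵀ * M + M * X + Xᵀ * Lᵀ + L * X) (Xᵀ * L + M * Y + L * Y)
        (Xᵀ * L + M * Y + L * Y)ᵀ (Lᵀ * Y + Yᵀ * L) := by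
  simp only [fromBlocks_transpose, fromBlocks_multiply, fromBlocks_add, mul_zero, zero_mul,
    add_zero]
  refine fromBlocks_inj.mpr ⟨by abel, by abel, ?_, by abel⟩
  simp only [transpose_add, transpose_mul, transpose_transpose, hM]
  abel

/-- Along the augmented trajectory `ξ(t) = exp(Ψ(t − t_k)) ξ_k`, the pseudo-Lyapunov function
`V(t) = ξ(t)ᵀ 𝒫 ξ(t)` is twice differentiable with second derivative
`V''(t) = ξ(t)ᵀ [[Λ, Γ],[Γᵀ, γ]] ξ(t)`. -/
theorem stmt_4 (n m : ℕ) (A : Matrix (Fin n) (Fin n) ℝ) (B : Matrix (Fin n) (Fin m) ℝ)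
    (K : Matrix (Fin m) (Fin n) ℝ) (P : Matrix (Fin n) (Fin n) ℝ) (hP : Pᵀ = P)
    (M L Lam Gam gam : Matrix (Fin n) (Fin n) ℝ)
    (hM : M = (A - B * K)ᵀ * P + P * (A - B * K)) (hL : L = P * B * K)
    (hLam : Lam = (A - B * K)ᵀ * M + M * (A - B * K) + (A - B * K)ᵀ * Lᵀ + L * (A - B * K))
    (hGam : Gam = (A - B * K)ᵀ * L + M * B * K + L * B * K)
    (hgam : gam = Lᵀ * B * K + Kᵀ * Bᵀ * L)
    (Ψ Pcal : Matrix (Fin n ⊕ Fin n) (Fin n ⊕ Fin n) ℝ)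
    (hΨ : Ψ = fromBlocks (A - B * K) (B * K) (A - B * K) (B * K))
    (hPcal : Pcal = fromBlocks P 0 0 0)
    (ξk : (Fin n ⊕ Fin n) → ℝ) (tk : ℝ)
    (ξ : ℝ → (Fin n ⊕ Fin n) → ℝ) (hξ : ξ = fun t => (exp ((t - tk) • Ψ)) *ᵥ ξk)
    (V : ℝ → ℝ) (hV : V = fun t => ξ t ⬝ᵥ (Pcal *ᵥ ξ t)) :
    Differentiable ℝ V ∧
      ∀ t : ℝ, HasDerivAt (deriv V) (ξ t ⬝ᵥ (fromBlocks Lam Gam Gamᵀ gam *ᵥ ξ t)) t := by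
  have hξ' (t : ℝ) : HasDerivAt ξ (Ψ *ᵥ ξ t) t := by
    subst hξ
    exact hasDerivAt_exp_sub_smul_mulVec Ψ tk ξk t
  have hMsymm : Mᵀ = M := by
    rw [hM, transpose_add, transpose_mul, transpose_mul, transpose_transpose, hP, add_comm]
  have hLyapPcal : Ψᵀ * Pcal + Pcal * Ψ = fromBlocks M L Lᵀ 0 := by
    have h := fromBlocks_transpose_mul_add_mul_fromBlocks (A - B * K) (B * K) P 0 hP
    rw [transpose_zero] at h
    rw [hΨ, hPcal, h, hM, hL]
    simp only [mul_zero, zero_mul, add_zero, zero_add, Matrix.mul_assoc]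
  have hLyapQ : Ψᵀ * fromBlocks M L Lᵀ 0 + fromBlocks M L Lᵀ 0 * Ψ =
      fromBlocks Lam Gam Gamᵀ gam := by
    rw [hΨ, fromBlocks_transpose_mul_add_mul_fromBlocks _ _ _ _ hMsymm, hLam, hGam, hgam]
    simp only [Matrix.mul_assoc, transpose_mul]
  have hV' (t : ℝ) : HasDerivAt V (ξ t ⬝ᵥ (fromBlocks M L Lᵀ 0 *ᵥ ξ t)) t := by
    rw [hV, ← hLyapPcal]
    exact (hξ' t).dotProduct_mulVec_of_eq_mulVec Pcal
  refine ⟨fun t => (hV' t).differentiableAt, fun t => ?_⟩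
  rw [show deriv V = _ from funext fun t => (hV' t).deriv, ← hLyapQ]
  exact (hξ' t).dotProduct_mulVec_of_eq_mulVec _
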